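/- Let M₁, M₂, M₆ be the 4×4 complex antisymmetric matrices with rows [[0,i,0,0],[−i,0,0,0],[0,0,0,i],[0,0,−i,0]], [[0,1,0,0],[−1,0,0,0],[0,0,0,−1],[0,0,1,0]], and [[0,0,0,1],[0,0,−1,0],[0,1,0,0],[−1,0,0,0]] respectively (the matrices of the 2-forms ω₁ = i e₁∧e₂ + i e₃∧e₄, ω₂ = e₁∧e₂ − e₃∧e₄, ω₆ = e₁∧e₄ − e₂∧e₃ on ℂ⁴). Then a matrix U ∈ SU(4) = Matrix.specialUnitaryGroup (Fin 4) ℂ satisfies Uᵀ * Mᵢ * U = Mᵢ for all i ∈ {1, 2, 6} if and only if U = Matrix.fromBlocks A 0 0 A (the block-diagonal matrix diag(A, A)) for some A ∈ SU(2) = Matrix.specialUnitaryGroup (Fin 2) ℂ. (This stabilizer subgroup of SU(4) realizes the exceptional isomorphism Spin 3 ≅ Sp 1 ≅ SU 2.) -/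
import Mathlib

open Matrix Complex

/-- The matrix of the 2-form `ω₁ = i e₁∧e₂ + i e₃∧e₄` on `ℂ⁴`. -/
noncomputable def M₁ : Matrix (Fin 4) (Fin 4) ℂ :=
  !![0, I, 0, 0; -I, 0, 0, 0; 0, 0, 0, I; 0, 0, -I, 0]

/-- The matrix of the 2-form `ω₂ = e₁∧e₂ − e₃∧e₄` on `ℂ⁴`. -/
noncomputable def M₂ : Matrix (Fin 4) (Fin 4) ℂ :=
  !![0, 1, 0, 0; -1, 0, 0, 0; 0, 0, 0, -1; 0, 0, 1, 0]

/-- The matrix of the 2-form `ω₆ = e₁∧e₄ − e₂∧e₃` on `ℂ⁴`. -/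
noncomputable def M₆ : Matrix (Fin 4) (Fin 4) ℂ :=
  !![0, 0, 0, 1; 0, 0, -1, 0; 0, 1, 0, 0; -1, 0, 0, 0]

private lemma eq_of_I_mul_eq {u v : ℂ} (h : Complex.I * u = Complex.I * v) : u = v :=
  mul_left_cancel₀ Complex.I_ne_zero h

private lemma reindex_blocks (A : Matrix (Fin 2) (Fin 2) ℂ) :
    (Matrix.reindex finSumFinEquiv finSumFinEquiv (Matrix.fromBlocks A 0 0 A) :
      Matrix (Fin 4) (Fin 4) ℂ) =
    !![A 0 0, A 0 1, 0, 0; A 1 0, A 1 1, 0, 0;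
       0, 0, A 0 0, A 0 1; 0, 0, A 1 0, A 1 1] := by
  ext i j
  fin_cases i <;> fin_cases j <;>
    simp [Matrix.fromBlocks, Matrix.vecHead, Matrix.vecTail,
      show (finSumFinEquiv.symm (0 : Fin 4) : Fin 2 ⊕ Fin 2) = Sum.inl 0 from rfl,
      show (finSumFinEquiv.symm (1 : Fin 4) : Fin 2 ⊕ Fin 2) = Sum.inl 1 from rfl,
      show (finSumFinEquiv.symm (2 : Fin 4) : Fin 2 ⊕ Fin 2) = Sum.inr 0 from rfl,
      show (finSumFinEquiv.symm (3 : Fin 4) : Fin 2 ⊕ Fin 2) = Sum.inr 1 from rfl]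

set_option maxHeartbeats 2000000 in
/-- A matrix `U ∈ SU(4)` stabilizes the three 2-forms `ω₁ = i e₁∧e₂ + i e₃∧e₄`,
`ω₂ = e₁∧e₂ − e₃∧e₄` and `ω₆ = e₁∧e₄ − e₂∧e₃` if and only if it is the block diagonal
matrix `diag(A, A)` for some `A ∈ SU(2)`.  This stabilizer realizes
`Spin 3 ≅ Sp 1 ≅ SU 2`. -/
theorem stabilizer_omega126_eq_su2 (U : Matrix (Fin 4) (Fin 4) ℂ)
    (hU : U ∈ Matrix.specialUnitaryGroup (Fin 4) ℂ) :
    (Uᵀ * M₁ * U = M₁ ∧ Uᵀ * M₂ * U = M₂ ∧ Uᵀ * M₆ * U = M₆) ↔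
      ∃ A : Matrix (Fin 2) (Fin 2) ℂ,
        A ∈ Matrix.specialUnitaryGroup (Fin 2) ℂ ∧
        U = Matrix.reindex finSumFinEquiv finSumFinEquiv (Matrix.fromBlocks A 0 0 A) := by
  constructor
  · rintro ⟨hw1, hw2, hw6⟩
    have hsU : star U * U = 1 := hU.1.1
    have hUs : U * star U = 1 := hU.1.2
    set V := U.map (starRingEnd ℂ) with hVdef
    have hVt : V * Uᵀ = 1 := by
      have h := congrArg Matrix.transpose hUs
      rw [Matrix.transpose_mul, Matrix.transpose_one, Matrix.star_eq_conjTranspose] at h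
      rwa [show (Uᴴ)ᵀ = V from by ext i j; simp [hVdef, Matrix.conjTranspose_apply]] at h
    have key : ∀ M : Matrix (Fin 4) (Fin 4) ℂ, Uᵀ * M * U = M → M * U = V * M := by
      intro M hM
      calc M * U = ((V * Uᵀ) * M) * U := by rw [hVt, Matrix.one_mul]
        _ = V * (Uᵀ * M * U) := by simp only [Matrix.mul_assoc]
        _ = V * M := by rw [hM]
    have h2 := key M₂ hw2
    have h6 := key M₆ hw6
    have c1 : M₁ * V = U * M₁ := by
      have h := congrArg (fun X => X.map (starRingEnd ℂ)) (key M₁ hw1)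
      simp only [Matrix.map_mul] at h
      have hm : M₁.map (starRingEnd ℂ) = -M₁ := by
        ext i j; fin_cases i <;> fin_cases j <;> simp [M₁, Matrix.vecHead, Matrix.vecTail]
      have hv : V.map (starRingEnd ℂ) = U := by ext i j; simp [hVdef]
      rw [hm, hv] at h
      have := h
      simp only [Matrix.neg_mul, Matrix.mul_neg, neg_inj] at this
      linear_combination (norm := skip) this
      abel
    have hK : M₁ * M₂ * U = U * (M₁ * M₂) := by
      calc M₁ * M₂ * U = M₁ * (M₂ * U) := by rw [Matrix.mul_assoc]
        _ = (M₁ * V) * M₂ := by rw [h2, Matrix.mul_assoc]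
        _ = U * (M₁ * M₂) := by rw [c1, Matrix.mul_assoc]
    have hL : M₁ * M₆ * U = U * (M₁ * M₆) := by
      calc M₁ * M₆ * U = M₁ * (M₆ * U) := by rw [Matrix.mul_assoc]
        _ = (M₁ * V) * M₆ := by rw [h6, Matrix.mul_assoc]
        _ = U * (M₁ * M₆) := by rw [c1, Matrix.mul_assoc]
    have zfact : ∀ j k : Fin 4, (M₁ * M₂ * U) j k = (U * (M₁ * M₂)) j k :=
      fun j k => by rw [hK]
    have lfact : ∀ j k : Fin 4, (M₁ * M₆ * U) j k = (U * (M₁ * M₆)) j k :=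
      fun j k => by rw [hL]
    have z02 : U 0 2 = 0 := by
      have h := zfact 0 2; simp [Matrix.mul_apply, Fin.sum_univ_four, Matrix.vecHead, Matrix.vecTail, M₁, M₂] at h
      refine eq_of_I_mul_eq ?_
      first | linear_combination (1/2 : ℂ) * h | linear_combination (-1/2 : ℂ) * h
    have z03 : U 0 3 = 0 := by
      have h := zfact 0 3; simp [Matrix.mul_apply, Fin.sum_univ_four, Matrix.vecHead, Matrix.vecTail, M₁, M₂] at h
      refine eq_of_I_mul_eq ?_
      first | linear_combination (1/2 : ℂ) * h | linear_combination (-1/2 : ℂ) * h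
    have z12 : U 1 2 = 0 := by
      have h := zfact 1 2; simp [Matrix.mul_apply, Fin.sum_univ_four, Matrix.vecHead, Matrix.vecTail, M₁, M₂] at h
      refine eq_of_I_mul_eq ?_
      first | linear_combination (1/2 : ℂ) * h | linear_combination (-1/2 : ℂ) * h
    have z13 : U 1 3 = 0 := by
      have h := zfact 1 3; simp [Matrix.mul_apply, Fin.sum_univ_four, Matrix.vecHead, Matrix.vecTail, M₁, M₂] at h
      refine eq_of_I_mul_eq ?_
      first | linear_combination (1/2 : ℂ) * h | linear_combination (-1/2 : ℂ) * h
    have z20 : U 2 0 = 0 := by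
      have h := zfact 2 0; simp [Matrix.mul_apply, Fin.sum_univ_four, Matrix.vecHead, Matrix.vecTail, M₁, M₂] at h
      refine eq_of_I_mul_eq ?_
      first | linear_combination (1/2 : ℂ) * h | linear_combination (-1/2 : ℂ) * h
    have z21 : U 2 1 = 0 := by
      have h := zfact 2 1; simp [Matrix.mul_apply, Fin.sum_univ_four, Matrix.vecHead, Matrix.vecTail, M₁, M₂] at h
      refine eq_of_I_mul_eq ?_
      first | linear_combination (1/2 : ℂ) * h | linear_combination (-1/2 : ℂ) * h
    have z30 : U 3 0 = 0 := by
      have h := zfact 3 0; simp [Matrix.mul_apply, Fin.sum_univ_four, Matrix.vecHead, Matrix.vecTail, M₁, M₂] at h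
      refine eq_of_I_mul_eq ?_
      first | linear_combination (1/2 : ℂ) * h | linear_combination (-1/2 : ℂ) * h
    have z31 : U 3 1 = 0 := by
      have h := zfact 3 1; simp [Matrix.mul_apply, Fin.sum_univ_four, Matrix.vecHead, Matrix.vecTail, M₁, M₂] at h
      refine eq_of_I_mul_eq ?_
      first | linear_combination (1/2 : ℂ) * h | linear_combination (-1/2 : ℂ) * h
    have e22 : U 2 2 = U 0 0 := by
      have h := lfact 0 2; simp [Matrix.mul_apply, Fin.sum_univ_four, Matrix.vecHead, Matrix.vecTail, M₁, M₆, z02, z03, z12, z13] at h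
      refine eq_of_I_mul_eq ?_
      first | linear_combination h | linear_combination -h
    have e23 : U 2 3 = U 0 1 := by
      have h := lfact 0 3; simp [Matrix.mul_apply, Fin.sum_univ_four, Matrix.vecHead, Matrix.vecTail, M₁, M₆, z02, z03, z12, z13] at h
      refine eq_of_I_mul_eq ?_
      first | linear_combination h | linear_combination -h
    have e32 : U 3 2 = U 1 0 := by
      have h := lfact 1 2; simp [Matrix.mul_apply, Fin.sum_univ_four, Matrix.vecHead, Matrix.vecTail, M₁, M₆, z02, z03, z12, z13] at h
      refine eq_of_I_mul_eq ?_
      first | linear_combination h | linear_combination -h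
    have e33 : U 3 3 = U 1 1 := by
      have h := lfact 1 3; simp [Matrix.mul_apply, Fin.sum_univ_four, Matrix.vecHead, Matrix.vecTail, M₁, M₆, z02, z03, z12, z13] at h
      refine eq_of_I_mul_eq ?_
      first | linear_combination h | linear_combination -h
    refine ⟨!![U 0 0, U 0 1; U 1 0, U 1 1], ?_, ?_⟩
    · rw [Matrix.mem_specialUnitaryGroup_iff]
      constructor
      · rw [Matrix.mem_unitaryGroup_iff']
        ext i j
        have q00 := congrFun (congrFun hsU 0) 0
        have q01 := congrFun (congrFun hsU 0) 1
        have q10 := congrFun (congrFun hsU 1) 0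
        have q11 := congrFun (congrFun hsU 1) 1
        simp [Matrix.mul_apply, Fin.sum_univ_four, Matrix.star_apply, Matrix.vecHead, Matrix.vecTail, z20, z21, z30, z31]
          at q00 q01 q10 q11
        fin_cases i <;> fin_cases j <;>
          simp [Matrix.mul_apply, Fin.sum_univ_two, Matrix.star_apply, Matrix.vecHead, Matrix.vecTail] <;>
          first
            | linear_combination q00 | linear_combination q01
            | linear_combination q10 | linear_combination q11
      · have q := congrFun (congrFun hw2 0) 1
        simp [Matrix.mul_apply, Fin.sum_univ_four, Matrix.transpose_apply, Matrix.vecHead,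
          Matrix.vecTail, M₂, z20, z30] at q
        rw [Matrix.det_fin_two]
        simp [Matrix.vecHead, Matrix.vecTail]
        linear_combination q
    · rw [reindex_blocks]
      ext i j
      fin_cases i <;> fin_cases j <;>
        simp [Matrix.vecHead, Matrix.vecTail, z02, z03, z12, z13, z20, z21, z30, z31,
          e22, e23, e32, e33]
  · rintro ⟨A, hA, rfl⟩
    have hdet : A 0 0 * A 1 1 - A 0 1 * A 1 0 = 1 := by
      rw [← Matrix.det_fin_two]; exact hA.2
    rw [reindex_blocks]
    refine ⟨?_, ?_, ?_⟩ <;>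
      · ext i j
        fin_cases i <;> fin_cases j <;>
          simp [M₁, M₂, M₆, Matrix.mul_apply, Fin.sum_univ_four, Matrix.transpose_apply,
            Matrix.vecHead, Matrix.vecTail] <;>
          first | rfl | linear_combination hdet | linear_combination -hdet | linear_combination Complex.I * hdet | linear_combination (-Complex.I) * hdet | ring
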